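/- arXiv:2004.08007 — 3 statements merged into one kernel-verified Lean document; each statement's English description precedes it below -/
import Mathlib

section
/- Let f(x) = x^8 * h(x + 4/x) where h = x^8 + 19x^7 + 152x^6 + 664x^5 + 1712x^4 + 2608x^3 + 2176x^2 + 768x, with complex roots π_1,...,π_16. Then P_2(f) := (R_2(f) - R_1(f))/2 = 0 and P_3(f) := (R_3(f) - R_1(f))/3 = 0, where R_n(f) = 4^n + 1 - Σ π_i^n. That is, a curve with this real Weil polynomial has no places of degree 2 or 3. -/
open Polynomial BigOperators

/-- The real Weil polynomial `h = x^8 + 19x^7 + 152x^6 + 664x^5 + 1712x^4 + 2608x^3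
+ 2176x^2 + 768x`, over `ℂ`. -/
noncomputable def hRWP : Polynomial ℂ :=
  X ^ 8 + 19 * X ^ 7 + 152 * X ^ 6 + 664 * X ^ 5 + 1712 * X ^ 4 + 2608 * X ^ 3
    + 2176 * X ^ 2 + 768 * X

/-- `R n = 4^n + 1 - ∑ πᵢⁿ`. -/
noncomputable def Rn (π : Fin 16 → ℂ) (n : ℕ) : ℂ :=
  4 ^ n + 1 - ∑ i : Fin 16, π i ^ n

/-- The expansion of `x^8 * hRWP(x + 4/x)` as a polynomial. -/
noncomputable def gAux : Polynomial ℂ :=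
  X ^ 16 + C 19 * X ^ 15 + C 184 * X ^ 14 + C 1196 * X ^ 13 + C 5808 * X ^ 12
    + C 22272 * X ^ 11 + C 69632 * X ^ 10 + C 180864 * X ^ 9 + C 394240 * X ^ 8
    + C 723456 * X ^ 7 + C 1114112 * X ^ 6 + C 1425408 * X ^ 5 + C 1486848 * X ^ 4
    + C 1224704 * X ^ 3 + C 753664 * X ^ 2 + C 311296 * X + C 65536

set_option maxHeartbeats 1000000 in
lemma gAux_eval (x : ℂ) (hx : x ≠ 0) :
    x ^ 8 * hRWP.eval (x + 4 / x) = gAux.eval x := by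
  simp only [hRWP, gAux, eval_add, eval_mul, eval_pow, eval_X, eval_C, eval_ofNat]
  have hinv : x * x⁻¹ = 1 := mul_inv_cancel₀ hx
  rw [div_eq_mul_inv]
  set y := x⁻¹ with hy
  linear_combination (32 * x ^ 14 + 448 * x ^ 13 * y + 532 * x ^ 13 + 3584 * x ^ 12 * y ^ 2 + 6384 * x ^ 12 * y + 4096 * x ^ 12 + 17920 * x ^ 11 * y ^ 3 + 42560 * x ^ 11 * y ^ 2 + 40064 * x ^ 11 * y + 19664 * x ^ 11 + 57344 * x ^ 10 * y ^ 4 + 170240 * x ^ 10 * y ^ 3 + 212480 * x ^ 10 * y ^ 2 + 148800 * x ^ 10 * y + 67456 * x ^ 10 + 114688 * x ^ 9 * y ^ 5 + 408576 * x ^ 9 * y ^ 4 + 641024 * x ^ 9 * y ^ 3 + 595200 * x ^ 9 * y ^ 2 + 376832 * x ^ 9 * y + 180096 * x ^ 9 + 131072 * x ^ 8 * y ^ 6 + 544768 * x ^ 8 * y ^ 5 + 1048576 * x ^ 8 * y ^ 4 + 1258496 * x ^ 8 * y ^ 3 + 1079296 * x ^ 8 * y ^ 2 + 720384 * x ^ 8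 * y + 394240 * x ^ 8 + 65536 * x ^ 7 * y ^ 7 + 311296 * x ^ 7 * y ^ 6 + 753664 * x ^ 7 * y ^ 5 + 1224704 * x ^ 7 * y ^ 4 + 1486848 * x ^ 7 * y ^ 3 + 1425408 * x ^ 7 * y ^ 2 + 1114112 * x ^ 7 * y + 723456 * x ^ 7 + 65536 * x ^ 6 * y ^ 6 + 311296 * x ^ 6 * y ^ 5 + 753664 * x ^ 6 * y ^ 4 + 1224704 * x ^ 6 * y ^ 3 + 1486848 * x ^ 6 * y ^ 2 + 1425408 * x ^ 6 * y + 1114112 * x ^ 6 + 65536 * x ^ 5 * y ^ 5 + 311296 * x ^ 5 * y ^ 4 + 753664 * x ^ 5 * y ^ 3 + 1224704 * x ^ 5 * y ^ 2 + 1486848 * x ^ 5 * y + 1425408 * x ^ 5 + 65536 * x ^ 4 * y ^ 4 + 311296 * x ^ 4 * y ^ 3 + 753664 * x ^ 4 * y ^ 2 + 1224704 * x ^ 4 * y + 1486848 * x ^ 4 + 65536 * x ^ 3 * y ^ 3 + 311296 * x ^ 3 * y ^ 2 + 753664 * x ^ 3 * y + 1224704 * x ^ 3 + 65536 * x ^ 2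 * y ^ 2 + 311296 * x ^ 2 * y + 753664 * x ^ 2 + 65536 * x * y + 311296 * x + 65536) * hinv

lemma coeff_prod_eq (π : Fin 16 → ℂ) (k : ℕ) (hk : k ≤ 16) :
    (∏ i : Fin 16, (X - C (π i))).coeff k
      = (-1) ^ (16 - k) * MvPolynomial.aeval π (MvPolynomial.esymm (Fin 16) ℂ (16 - k)) := by
  rw [MvPolynomial.aeval_esymm_eq_multiset_esymm]
  have h1 : (∏ i : Fin 16, (X - C (π i)))
      = ((Finset.univ.val.map π).map fun t => X - C t).prod := by
    rw [Finset.prod_eq_multiset_prod, Multiset.map_map]; rfl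
  have hcard : Multiset.card (Finset.univ.val.map π) = 16 := by simp
  rw [h1, Multiset.prod_X_sub_C_coeff _ (by rw [hcard]; exact hk), hcard]

lemma newton2 : (MvPolynomial.psum (Fin 16) ℂ 2 : MvPolynomial (Fin 16) ℂ)
    = (-1) ^ 3 * 2 * MvPolynomial.esymm (Fin 16) ℂ 2
      + MvPolynomial.esymm (Fin 16) ℂ 1 * MvPolynomial.psum (Fin 16) ℂ 1 := by
  rw [MvPolynomial.psum_eq_mul_esymm_sub_sum (Fin 16) ℂ 2 (by norm_num),
    Finset.sum_filter, Finset.Nat.sum_antidiagonal_eq_sum_range_succ_mk]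
  simp [Finset.sum_range_succ, Set.mem_Ioo]

lemma newton3 : (MvPolynomial.psum (Fin 16) ℂ 3 : MvPolynomial (Fin 16) ℂ)
    = (-1) ^ 4 * 3 * MvPolynomial.esymm (Fin 16) ℂ 3
      + MvPolynomial.esymm (Fin 16) ℂ 1 * MvPolynomial.psum (Fin 16) ℂ 2
      - MvPolynomial.esymm (Fin 16) ℂ 2 * MvPolynomial.psum (Fin 16) ℂ 1 := by
  rw [MvPolynomial.psum_eq_mul_esymm_sub_sum (Fin 16) ℂ 3 (by norm_num),
    Finset.sum_filter, Finset.Nat.sum_antidiagonal_eq_sum_range_succ_mk]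
  simp [Finset.sum_range_succ, Set.mem_Ioo]
  ring

theorem no_places_of_degree_two_or_three (f : Polynomial ℂ) (π : Fin 16 → ℂ)
    (hroots : f = ∏ i : Fin 16, (X - C (π i)))
    (hWeil : ∀ x : ℂ, x ≠ 0 → f.eval x = x ^ 8 * hRWP.eval (x + 4 / x)) :
    (Rn π 2 - Rn π 1) / 2 = 0 ∧ (Rn π 3 - Rn π 1) / 3 = 0 := by
  -- f = gAux
  have hfg : f = gAux := by
    apply Polynomial.eq_of_infinite_eval_eq
    apply Set.Infinite.mono (s := ({0}ᶜ : Set ℂ))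
    · intro x hx
      have hx0 : x ≠ 0 := hx
      simp only [Set.mem_setOf_eq]
      rw [hWeil x hx0, gAux_eval x hx0]
    · exact Set.Finite.infinite_compl (Set.finite_singleton 0)
  -- coefficients of gAux
  have hc15 : gAux.coeff 15 = 19 := by
    simp [gAux, coeff_C, coeff_X_pow]
  have hc14 : gAux.coeff 14 = 184 := by
    simp [gAux, coeff_C, coeff_X_pow]
  have hc13 : gAux.coeff 13 = 1196 := by
    simp [gAux, coeff_C, coeff_X_pow]
  -- elementary symmetric values
  have hE1 : MvPolynomial.aeval π (MvPolynomial.esymm (Fin 16) ℂ 1) = -19 := by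
    have h := coeff_prod_eq π 15 (by norm_num)
    rw [← hroots, hfg, hc15, show (16 : ℕ) - 15 = 1 from rfl] at h
    linear_combination h
  have hE2 : MvPolynomial.aeval π (MvPolynomial.esymm (Fin 16) ℂ 2) = 184 := by
    have h := coeff_prod_eq π 14 (by norm_num)
    rw [← hroots, hfg, hc14, show (16 : ℕ) - 14 = 2 from rfl] at h
    linear_combination -h
  have hE3 : MvPolynomial.aeval π (MvPolynomial.esymm (Fin 16) ℂ 3) = -1196 := by
    have h := coeff_prod_eq π 13 (by norm_num)
    rw [← hroots, hfg, hc13, show (16 : ℕ) - 13 = 3 from rfl] at h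
    linear_combination h
  -- power sums
  have hP1 : MvPolynomial.aeval π (MvPolynomial.psum (Fin 16) ℂ 1) = -19 := by
    rw [show (MvPolynomial.psum (Fin 16) ℂ 1) = MvPolynomial.esymm (Fin 16) ℂ 1 by
      rw [MvPolynomial.psum_one, MvPolynomial.esymm_one]]
    exact hE1
  have hP2 : MvPolynomial.aeval π (MvPolynomial.psum (Fin 16) ℂ 2) = -7 := by
    have h := congrArg (MvPolynomial.aeval π) newton2
    simp only [map_add, map_mul, map_pow, map_neg, map_one, map_ofNat] at h
    rw [hE1, hE2, hP1] at h
    rw [h]; norm_num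
  have hP3 : MvPolynomial.aeval π (MvPolynomial.psum (Fin 16) ℂ 3) = 41 := by
    have h := congrArg (MvPolynomial.aeval π) newton3
    simp only [map_add, map_sub, map_mul, map_pow, map_neg, map_one, map_ofNat] at h
    rw [hE1, hE2, hE3, hP1, hP2] at h
    rw [h]; norm_num
  have hPsum : ∀ n : ℕ, MvPolynomial.aeval π (MvPolynomial.psum (Fin 16) ℂ n)
      = ∑ i : Fin 16, π i ^ n := by
    intro n
    simp [MvPolynomial.psum]
  have hS1 : ∑ i : Fin 16, π i ^ 1 = -19 := by rw [← hPsum 1, hP1]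
  have hS2 : ∑ i : Fin 16, π i ^ 2 = -7 := by rw [← hPsum 2, hP2]
  have hS3 : ∑ i : Fin 16, π i ^ 3 = 41 := by rw [← hPsum 3, hP3]
  constructor
  · simp only [Rn, hS1, hS2]
    norm_num
  · simp only [Rn, hS1, hS3]
    norm_num
end

section
/- Let f(x) = x^8 * h(x + 4/x) where h = x^8 + 19x^7 + 152x^6 + 664x^5 + 1712x^4 + 2608x^3 + 2176x^2 + 768x, with complex roots π_1,...,π_16, and R_n(f) = 4^n + 1 - Σ π_i^n. Then P_7(f) := (R_7(f) - R_1(f))/7 = 2496, and 2496 ≡ 0 (mod 3). -/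
open Polynomial BigOperators

/-! Expanding `x ^ 8 * h (x + 4 / x)` identifies `f` with an explicit monic polynomial of
degree 16. By Vieta its coefficients are, up to sign, the elementary symmetric functions of the
`πᵢ`, and Newton's identities turn `e₁, …, e₇` into the power sums `∑ πᵢ = -19` and
`∑ πᵢ ^ 7 = -1111`; hence `R₇ - R₁ = 4 ^ 7 - 4 + 1111 - 19 = 7 · 2496`. -/

open Finset

namespace Polynomial

theorem eq_of_eval_eq_of_ne {R : Type*} [CommRing R] [IsDomain R] [Infinite R] {p q : R[X]}
    (a : R) (h : ∀ x ≠ a, p.eval x = q.eval x) : p = q :=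
  eq_of_infinite_eval_eq p q <| (Set.finite_singleton a).infinite_compl.mono h

theorem esymm_eq_coeff_of_eq_prod {ι R : Type*} [Fintype ι] [CommRing R] {p : R[X]}
    {π : ι → R} (hp : p = ∏ i, (X - C (π i))) {k : ℕ} (hk : k ≤ Fintype.card ι) :
    (univ.val.map π).esymm k = (-1) ^ k * p.coeff (Fintype.card ι - k) := by
  have hcard : Multiset.card (univ.val.map π) = Fintype.card ι := by simp
  have hp' : p = ((univ.val.map π).map fun t => X - C t).prod := by
    rw [hp, Multiset.map_map]; rfl
  rw [hp', Multiset.prod_X_sub_C_coeff _ (by omega), hcard, Nat.sub_sub_self hk, ← mul_assoc,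
    ← mul_pow]
  norm_num

end Polynomial

theorem sum_pow_succ_eq_newton {σ R : Type*} [Fintype σ] [CommRing R] (π : σ → R)
    (n : ℕ) :
    ∑ i, π i ^ (n + 1) = (-1) ^ n * (n + 1) * (univ.val.map π).esymm (n + 1)
      + ∑ j ∈ range n, (-1) ^ j * (univ.val.map π).esymm (j + 1) * ∑ i, π i ^ (n - j) := by
  have h := congrArg (MvPolynomial.aeval π)
    (MvPolynomial.psum_eq_mul_esymm_sub_sum σ R (n + 1) n.succ_pos)
  simp only [MvPolynomial.psum, MvPolynomial.aeval_esymm_eq_multiset_esymm, map_sum, map_sub,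
    map_mul, map_pow, map_neg, map_one, map_natCast, MvPolynomial.aeval_X] at h
  rw [h, sum_filter, Nat.sum_antidiagonal_eq_sum_range_succ_mk, sub_eq_add_neg, ← sum_neg_distrib,
    sum_range_succ, sum_range_succ']
  simp only [Set.mem_Ioo, lt_irrefl, false_and, and_false, if_false, neg_zero, add_zero]
  congr 1
  · push_cast
    ring
  refine sum_congr rfl fun j hj => ?_
  rw [if_pos ⟨j.succ_pos, by simpa using hj⟩, Nat.add_sub_add_right]
  ring

noncomputable def fRWP : ℂ[X] :=
  X ^ 16 + C 19 * X ^ 15 + C 184 * X ^ 14 + C 1196 * X ^ 13 + C 5808 * X ^ 12 + C 22272 * X ^ 11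
    + C 69632 * X ^ 10 + C 180864 * X ^ 9 + C 394240 * X ^ 8 + C 723456 * X ^ 7
    + C 1114112 * X ^ 6 + C 1425408 * X ^ 5 + C 1486848 * X ^ 4 + C 1224704 * X ^ 3
    + C 753664 * X ^ 2 + C 311296 * X + C 65536

theorem eval_fRWP {x : ℂ} (hx : x ≠ 0) : fRWP.eval x = x ^ 8 * hRWP.eval (x + 4 / x) := by
  have hx8 : x ^ 8 * hRWP.eval (x + 4 / x) = (x ^ 2 + 4) ^ 8 + 19 * (x ^ 2 + 4) ^ 7 * x
      + 152 * (x ^ 2 + 4) ^ 6 * x ^ 2 + 664 * (x ^ 2 + 4) ^ 5 * x ^ 3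
      + 1712 * (x ^ 2 + 4) ^ 4 * x ^ 4 + 2608 * (x ^ 2 + 4) ^ 3 * x ^ 5
      + 2176 * (x ^ 2 + 4) ^ 2 * x ^ 6 + 768 * (x ^ 2 + 4) * x ^ 7 := by
    simp only [hRWP, eval_add, eval_mul, eval_pow, eval_X, eval_ofNat]
    field_simp
  rw [hx8]
  simp only [fRWP, eval_add, eval_mul, eval_pow, eval_X, eval_C]
  ring

theorem sum_pow_roots_fRWP (π : Fin 16 → ℂ) (h : fRWP = ∏ i, (X - C (π i))) :
    ∑ i, π i = -19 ∧ ∑ i, π i ^ 7 = -1111 := by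
  have vieta (k : ℕ) (hk : k ≤ 16) :
      (univ.val.map π).esymm k = (-1) ^ k * fRWP.coeff (16 - k) :=
    esymm_eq_coeff_of_eq_prod h (by simpa using hk)
  generalize hM : univ.val.map π = M at vieta
  have newton (n : ℕ) := hM ▸ sum_pow_succ_eq_newton π n
  have p1 : ∑ i, π i = -19 := by simpa [vieta, fRWP, coeff_X_pow, coeff_C] using newton 0
  have p2 : ∑ i, π i ^ 2 = -7 := by
    rw [newton 1]; norm_num [sum_range_succ, vieta, fRWP, coeff_X_pow, coeff_C, p1]
  have p3 : ∑ i, π i ^ 3 = 41 := by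
    rw [newton 2]; norm_num [sum_range_succ, vieta, fRWP, coeff_X_pow, coeff_C, p1, p2]
  have p4 : ∑ i, π i ^ 4 = 1 := by
    rw [newton 3]; norm_num [sum_range_succ, vieta, fRWP, coeff_X_pow, coeff_C, p1, p2, p3]
  have p5 : ∑ i, π i ^ 5 = -199 := by
    rw [newton 4]; norm_num [sum_range_succ, vieta, fRWP, coeff_X_pow, coeff_C, p1, p2, p3, p4]
  have p6 : ∑ i, π i ^ 6 = 593 := by
    rw [newton 5]; norm_num [sum_range_succ, vieta, fRWP, coeff_X_pow, coeff_C, p1, p2, p3, p4, p5]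
  refine ⟨p1, ?_⟩
  rw [newton 6]
  norm_num [sum_range_succ, vieta, fRWP, coeff_X_pow, coeff_C, p1, p2, p3, p4, p5, p6]

theorem degree_seven_place_count (f : Polynomial ℂ) (π : Fin 16 → ℂ)
    (hroots : f = ∏ i : Fin 16, (X - C (π i)))
    (hWeil : ∀ x : ℂ, x ≠ 0 → f.eval x = x ^ 8 * hRWP.eval (x + 4 / x)) :
    (Rn π 7 - Rn π 1) / 7 = 2496 ∧ (2496 : ℤ) % 3 = 0 := by
  have hf : f = fRWP := eq_of_eval_eq_of_ne 0 fun x hx => by rw [hWeil x hx, eval_fRWP hx]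
  obtain ⟨p1, p7⟩ := sum_pow_roots_fRWP π (hf ▸ hroots)
  refine ⟨?_, by decide⟩
  simp only [Rn, pow_one, p1, p7]
  norm_num
end

section
/- The genus-2 curve D over F_4 given by y^2 + (x^3 + x + 1)y = x^6 + x^5 + x^4 + x^2 has exactly 8 affine F_4-rational points; equivalently, counting the two rational points at infinity, D has 10 F_4-rational points. -/
/-- The field `F₄` with four elements. -/
notation "F₄" => GaloisField 2 2

/-- The genus-2 curve `D : y² + (x³+x+1)y = x⁶+x⁵+x⁴+x²` over `F₄` has exactly 8 affine
`F₄`-rational points; together with the two rational points at infinity, `D` has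
`8 + 2 = 10` rational points. -/
theorem genus_two_curve_affine_points :
    Set.ncard {p : F₄ × F₄ |
      p.2 ^ 2 + (p.1 ^ 3 + p.1 + 1) * p.2 = p.1 ^ 6 + p.1 ^ 5 + p.1 ^ 4 + p.1 ^ 2} = 8 ∧
    8 + 2 = 10 := by
  classical
  haveI : Fintype F₄ := Fintype.ofFinite F₄
  refine ⟨?_, rfl⟩
  have hchar : (2 : F₄) = 0 := by
    exact_mod_cast CharP.cast_eq_zero F₄ 2
  have hcard : Fintype.card F₄ = 4 := by
    have := GaloisField.card 2 2 (by norm_num)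
    simpa using this
  have hx4 : ∀ x : F₄, x ^ 4 = x := by
    intro x
    have := FiniteField.pow_card x
    rwa [hcard] at this
  have hcne : ∀ x : F₄, x ^ 3 + x + 1 ≠ 0 := by
    intro x h
    have hx2 : x ^ 2 = 0 := by
      linear_combination x * h - hx4 x - x * hchar
    have hx0 : x = 0 := by
      exact pow_eq_zero_iff (by norm_num) |>.mp hx2
    rw [hx0] at h
    simp at h
  have hset : {p : F₄ × F₄ |
      p.2 ^ 2 + (p.1 ^ 3 + p.1 + 1) * p.2 = p.1 ^ 6 + p.1 ^ 5 + p.1 ^ 4 + p.1 ^ 2}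
      = {p : F₄ × F₄ | p.2 = p.1 ^ 2 + p.1} ∪ {p : F₄ × F₄ | p.2 = p.1 ^ 3 + p.1 ^ 2 + 1} := by
    ext ⟨x, y⟩
    simp only [Set.mem_setOf_eq, Set.mem_union]
    constructor
    · intro h
      have hz : (y + (x ^ 2 + x)) * (y + (x ^ 3 + x ^ 2 + 1)) = 0 := by
        linear_combination h + (x ^ 2 + 1) * hx4 x +
          (x ^ 2 * y + x ^ 5 + x ^ 4 + x ^ 3 + x ^ 2 + x) * hchar
      rcases mul_eq_zero.mp hz with h' | h'
      · left; linear_combination h' - (x ^ 2 + x) * hchar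
      · right; linear_combination h' - (x ^ 3 + x ^ 2 + 1) * hchar
    · rintro (h | h)
      · subst h
        linear_combination (x ^ 2 + 1) * hx4 x +
          (-x ^ 6 + 2 * x ^ 3 + x ^ 2 + x) * hchar
      · subst h
        linear_combination (x ^ 2 + 1) * hx4 x +
          (x ^ 5 + 3 * x ^ 3 + x ^ 2 + x + 1) * hchar
  rw [hset]
  have hgraph : ∀ f : F₄ → F₄, {p : F₄ × F₄ | p.2 = f p.1} = (fun x => (x, f x)) '' Set.univ := by
    intro f
    ext ⟨x, y⟩
    simp [eq_comm, Prod.ext_iff]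
  have hgc : ∀ f : F₄ → F₄, ({p : F₄ × F₄ | p.2 = f p.1} : Set (F₄ × F₄)).ncard = 4 := by
    intro f
    rw [hgraph f, Set.ncard_image_of_injective _ (fun a b hab => congrArg Prod.fst hab),
      Set.ncard_univ, Nat.card_eq_fintype_card, hcard]
  have hdisj : Disjoint {p : F₄ × F₄ | p.2 = p.1 ^ 2 + p.1}
      {p : F₄ × F₄ | p.2 = p.1 ^ 3 + p.1 ^ 2 + 1} := by
    rw [Set.disjoint_left]
    rintro ⟨x, y⟩ h1 h2
    simp only [Set.mem_setOf_eq] at h1 h2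
    exact hcne x (by linear_combination h1 - h2 + x * hchar)
  rw [Set.ncard_union_eq hdisj (Set.toFinite _) (Set.toFinite _),
    hgc (fun x => x ^ 2 + x), hgc (fun x => x ^ 3 + x ^ 2 + 1)]
end
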